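/- arXiv:2506.08659 — 2 statements merged into one kernel-verified Lean document; each statement's English description precedes it below -/
import Mathlib

section
/- If two n×n matrices M₁ and M₂, each with all entries in {0,2}, are both CN matrices of braid projection words on n strands, then M₁ + M₂ is the CN matrix of some pure braid projection word on n strands. -/
/-!
A crossing between strands `a` and `b` exchanges their relative order and leaves the relative
order of every other pair of strands unchanged. Hence the `(a, b)` entry of a CN matrix is even
exactly when `a` and `b` end up in the same relative order as they started. If all entries are
even, the final permutation is strictly monotone, hence the identity. The CN matrix of `w₁ ++ w₂` is
`CN w₁ + CN w₂` as soon as `w₁` is pure, so the concatenation of the two given words is the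
required pure word.
-/

/-- Left position of a crossing letter, as an element of `Fin n`. -/
def posL (n : ℕ) (k : Fin (n - 1)) : Fin n := ⟨k.val, by have := k.isLt; omega⟩

/-- Right position of a crossing letter, as an element of `Fin n`. -/
def posR (n : ℕ) (k : Fin (n - 1)) : Fin n := ⟨k.val + 1, by have := k.isLt; omega⟩

/-- The transposition of positions induced by a crossing letter. -/
def braidSwap (n : ℕ) (k : Fin (n - 1)) : Equiv.Perm (Fin n) :=
  Equiv.swap (posL n k) (posR n k)

/-- CN matrix of a braid projection word, scanning with position-to-strand
assignment `π`.  Each letter records one crossing between the two strand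
labels currently at the involved positions (counted symmetrically). -/
def CNaux (n : ℕ) : Equiv.Perm (Fin n) → List (Fin (n - 1)) → Matrix (Fin n) (Fin n) ℕ
  | _, [] => 0
  | π, k :: w =>
      Matrix.single (π (posL n k)) (π (posR n k)) 1 +
      Matrix.single (π (posR n k)) (π (posL n k)) 1 +
      CNaux n (π * braidSwap n k) w

/-- CN matrix of a braid projection word on `n` strands. -/
def CN (n : ℕ) (w : List (Fin (n - 1))) : Matrix (Fin n) (Fin n) ℕ := CNaux n 1 w

/-- Final position-to-strand assignment after scanning the word. -/
def finalPerm (n : ℕ) : Equiv.Perm (Fin n) → List (Fin (n - 1)) → Equiv.Perm (Fin n)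
  | π, [] => π
  | π, k :: w => finalPerm n (π * braidSwap n k) w

/-- A braid projection word is pure if the induced permutation of strands
is the identity. -/
def IsPure (n : ℕ) (w : List (Fin (n - 1))) : Prop := finalPerm n 1 w = 1

/-- A zero-diagonal matrix is T0 if `i < j < k`, `M i j = 0` and `M j k = 0`
imply `M i k = 0`. -/
def IsT0 {n : ℕ} {α : Type*} [Zero α] (M : Matrix (Fin n) (Fin n) α) : Prop :=
  ∀ i j k : Fin n, i < j → j < k → M i j = 0 → M j k = 0 → M i k = 0

section

variable {n : ℕ}

lemma posL_lt_posR (k : Fin (n - 1)) : posL n k < posR n k :=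
  Fin.mk_lt_mk.mpr k.val.lt_succ_self

lemma braidSwap_lt_braidSwap_iff_lt_iff (k : Fin (n - 1)) (x y : Fin n) :
    (braidSwap n k x < braidSwap n k y ↔ x < y) ↔
      ¬(x = posL n k ∧ y = posR n k ∨ x = posR n k ∧ y = posL n k) := by
  have hL : (posL n k).val = k.val := rfl
  have hR : (posR n k).val = k.val + 1 := rfl
  rw [braidSwap, Equiv.swap_apply_def, Equiv.swap_apply_def]
  simp only [Fin.lt_def, Fin.ext_iff]
  split_ifs <;> omega

lemma CNaux_cons_apply (π : Equiv.Perm (Fin n)) (k : Fin (n - 1)) (w : List (Fin (n - 1)))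
    (x y : Fin n) :
    CNaux n π (k :: w) (π x) (π y) =
      (if x = posL n k ∧ y = posR n k ∨ x = posR n k ∧ y = posL n k then 1 else 0) +
        CNaux n (π * braidSwap n k) w (π x) (π y) := by
  have hLR := (posL_lt_posR k).ne
  simp only [CNaux, Matrix.add_apply, Matrix.single_apply, π.injective.eq_iff]
  split_ifs <;> grind

theorem even_CNaux_apply_iff (π : Equiv.Perm (Fin n)) (w : List (Fin (n - 1))) (a b : Fin n) :
    Even (CNaux n π w a b) ↔
      (π⁻¹ a < π⁻¹ b ↔ (finalPerm n π w)⁻¹ a < (finalPerm n π w)⁻¹ b) := by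
  induction w generalizing π with
  | nil => simp [CNaux, finalPerm]
  | cons k w ih =>
    obtain ⟨x, rfl⟩ := π.surjective a
    obtain ⟨y, rfl⟩ := π.surjective b
    have hinv (c : Fin n) : (π * braidSwap n k)⁻¹ (π c) = braidSwap n k c := by
      simp [braidSwap, mul_inv_rev, Equiv.swap_inv]
    have hπ (c : Fin n) : π⁻¹ (π c) = c := Equiv.Perm.inv_eq_iff_eq.mpr rfl
    have hrest := ih (π * braidSwap n k)
    rw [hinv, hinv] at hrest
    have hswap := braidSwap_lt_braidSwap_iff_lt_iff k x y
    rw [CNaux_cons_apply, finalPerm, hπ, hπ]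
    split_ifs
    · rw [add_comm, Nat.even_add_one, hrest]
      tauto
    · rw [zero_add, hrest]
      tauto

theorem isPure_of_forall_even_CN {w : List (Fin (n - 1))} (h : ∀ i j, Even (CN n w i j)) :
    IsPure n w := by
  have hmono : StrictMono ⇑(finalPerm n 1 w)⁻¹ := fun a b hab => by
    simpa [hab] using (even_CNaux_apply_iff 1 w a b).mp (h a b)
  exact inv_eq_one.mp (Equiv.ext (congrFun hmono.eq_id))

lemma CNaux_append (π : Equiv.Perm (Fin n)) (w₁ w₂ : List (Fin (n - 1))) :
    CNaux n π (w₁ ++ w₂) = CNaux n π w₁ + CNaux n (finalPerm n π w₁) w₂ := by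
  induction w₁ generalizing π with
  | nil => simp [CNaux, finalPerm]
  | cons k w ih => simp [CNaux, finalPerm, ih, add_assoc]

lemma finalPerm_append (π : Equiv.Perm (Fin n)) (w₁ w₂ : List (Fin (n - 1))) :
    finalPerm n π (w₁ ++ w₂) = finalPerm n (finalPerm n π w₁) w₂ := by
  induction w₁ generalizing π with
  | nil => rfl
  | cons k w ih => exact ih _

lemma CN_append_of_isPure {w₁ : List (Fin (n - 1))} (h : IsPure n w₁) (w₂ : List (Fin (n - 1))) :
    CN n (w₁ ++ w₂) = CN n w₁ + CN n w₂ := by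
  rw [CN, CNaux_append, h]
  rfl

lemma IsPure.append {w₁ w₂ : List (Fin (n - 1))} (h₁ : IsPure n w₁) (h₂ : IsPure n w₂) :
    IsPure n (w₁ ++ w₂) := by
  rw [IsPure, finalPerm_append, h₁]
  exact h₂

end

theorem stmt6 (n : ℕ) (M₁ M₂ : Matrix (Fin n) (Fin n) ℕ)
    (h₁02 : ∀ i j, M₁ i j = 0 ∨ M₁ i j = 2)
    (h₂02 : ∀ i j, M₂ i j = 0 ∨ M₂ i j = 2)
    (h₁ : ∃ w : List (Fin (n - 1)), CN n w = M₁)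
    (h₂ : ∃ w : List (Fin (n - 1)), CN n w = M₂) :
    ∃ w : List (Fin (n - 1)), IsPure n w ∧ CN n w = M₁ + M₂ := by
  obtain ⟨w₁, rfl⟩ := h₁
  obtain ⟨w₂, rfl⟩ := h₂
  have hpure (w : List (Fin (n - 1))) (h : ∀ i j, CN n w i j = 0 ∨ CN n w i j = 2) :
      IsPure n w :=
    isPure_of_forall_even_CN fun i j => by rcases h i j with h | h <;> simp [h]
  have hpure₁ := hpure w₁ h₁02
  exact ⟨w₁ ++ w₂, hpure₁.append (hpure w₂ h₂02), CN_append_of_isPure hpure₁ w₂⟩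
end

section
/- Let b be a signed braid word on n strands (a list of pairs (k, ε) with k ∈ Fin (n-1) and ε ∈ {+1, −1}) that is pure, i.e., the induced permutation of strands is the identity. Then the crossing matrix C(b) is symmetric: for all i, j, the signed count of crossings between strands i and j at which strand i passes over strand j equals the signed count of crossings at which strand j passes over strand i. -/
/-- OU matrix of a signed braid word scanned with assignment `π`:
entry `(i,j)` counts crossings between strands `i` and `j` where `i` is the
over-strand.  For a positive letter (`true`) the strand moving from position
`k` to position `k+1` is the over-strand. -/
def OUaux (n : ℕ) : Equiv.Perm (Fin n) → List (Fin (n - 1) × Bool) → Matrix (Fin n) (Fin n) ℕ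
  | _, [] => 0
  | π, (k, ε) :: w =>
      (if ε then Matrix.single (π (posL n k)) (π (posR n k)) 1
       else Matrix.single (π (posR n k)) (π (posL n k)) 1) +
      OUaux n (π * braidSwap n k) w

/-- OU matrix of a signed braid word on `n` strands. -/
def OU (n : ℕ) (b : List (Fin (n - 1) × Bool)) : Matrix (Fin n) (Fin n) ℕ := OUaux n 1 b

/-- Crossing matrix of a signed braid word scanned with assignment `π`:
entry `(i,j)` is the number of positive minus negative crossings between
strands `i` and `j` in which `i` is the over-strand. -/
def CMataux (n : ℕ) : Equiv.Perm (Fin n) → List (Fin (n - 1) × Bool) → Matrix (Fin n) (Fin n) ℤ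
  | _, [] => 0
  | π, (k, ε) :: w =>
      (if ε then Matrix.single (π (posL n k)) (π (posR n k)) (1 : ℤ)
       else -Matrix.single (π (posR n k)) (π (posL n k)) (1 : ℤ)) +
      CMataux n (π * braidSwap n k) w

/-- Crossing matrix of a signed braid word on `n` strands. -/
def CMat (n : ℕ) (b : List (Fin (n - 1) × Bool)) : Matrix (Fin n) (Fin n) ℤ := CMataux n 1 b

/-- Final position-to-strand assignment of a signed braid word. -/
def finalPermS (n : ℕ) : Equiv.Perm (Fin n) → List (Fin (n - 1) × Bool) → Equiv.Perm (Fin n)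
  | π, [] => π
  | π, (k, _) :: w => finalPermS n (π * braidSwap n k) w

/-- A signed braid word is pure if its induced permutation is the identity. -/
def IsPureS (n : ℕ) (b : List (Fin (n - 1) × Bool)) : Prop := finalPermS n 1 b = 1

/-!
Let `leftOf n π` be the 0/1 matrix recording which strand lies to the left of which under the
position-to-strand assignment `π`. A letter at positions `k, k + 1` reverses the order of exactly
the two strands `a, b` it crosses and, whatever its sign, contributes `E_{ab} - E_{ba}` to `C - Cᵀ`.
So `C - Cᵀ` telescopes to `leftOf` of the initial assignment minus `leftOf` of the final one, and
these cancel for a pure braid.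
-/

open Matrix

def leftOf (n : ℕ) (π : Equiv.Perm (Fin n)) : Matrix (Fin n) (Fin n) ℤ :=
  of fun i j => if π⁻¹ i < π⁻¹ j then 1 else 0

lemma val_posL (n : ℕ) (k : Fin (n - 1)) : (posL n k).val = k.val := rfl

lemma val_posR (n : ℕ) (k : Fin (n - 1)) : (posR n k).val = k.val + 1 := rfl

lemma braidSwap_inv (n : ℕ) (k : Fin (n - 1)) : (braidSwap n k)⁻¹ = braidSwap n k :=
  Equiv.swap_inv _ _

lemma braidSwap_apply_val (n : ℕ) (k : Fin (n - 1)) (p : Fin n) :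
    (braidSwap n k p).val =
      if p.val = k.val then k.val + 1 else if p.val = k.val + 1 then k.val else p.val := by
  simp only [braidSwap, Equiv.swap_apply_def, Fin.ext_iff, val_posL, val_posR]
  split_ifs <;> simp only [val_posL, val_posR]

lemma ite_lt_sub_ite_braidSwap_lt (n : ℕ) (k : Fin (n - 1)) (x y : Fin n) :
    ((if x < y then 1 else 0 : ℤ) - if braidSwap n k x < braidSwap n k y then 1 else 0) =
      (if posL n k = x ∧ posR n k = y then 1 else 0) -
        (if posL n k = y ∧ posR n k = x then 1 else 0) := by
  simp only [Fin.lt_def, braidSwap_apply_val, Fin.ext_iff, val_posL, val_posR]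
  split_ifs <;> omega

lemma leftOf_sub_leftOf_mul_braidSwap (n : ℕ) (π : Equiv.Perm (Fin n)) (k : Fin (n - 1)) :
    leftOf n π - leftOf n (π * braidSwap n k) =
      single (π (posL n k)) (π (posR n k)) 1 - (single (π (posL n k)) (π (posR n k)) 1)ᵀ := by
  ext i j
  have hinv (p : Fin n) (s : Fin n) : π p = s ↔ p = π⁻¹ s := Equiv.Perm.eq_inv_iff_eq.symm
  simp only [leftOf, _root_.mul_inv_rev, braidSwap_inv, Equiv.Perm.mul_apply, Matrix.sub_apply,
    transpose_apply, of_apply, single, hinv]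
  exact ite_lt_sub_ite_braidSwap_lt n k (π⁻¹ i) (π⁻¹ j)

lemma signedSingle_sub_transpose {m R : Type*} [DecidableEq m] [Ring R] (ε : Bool) (a b : m) :
    ((if ε then single a b (1 : R) else -single b a 1) -
        (if ε then single a b (1 : R) else -single b a 1)ᵀ) =
      single a b 1 - (single a b 1)ᵀ := by
  cases ε
  · simp only [Bool.false_eq_true, ↓reduceIte, transpose_neg, transpose_single]
    abel
  · rfl

lemma CMataux_sub_transpose (n : ℕ) (π : Equiv.Perm (Fin n)) (b : List (Fin (n - 1) × Bool)) :
    CMataux n π b - (CMataux n π b)ᵀ = leftOf n π - leftOf n (finalPermS n π b) := by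
  induction b generalizing π with
  | nil => simp only [CMataux, finalPermS, transpose_zero, sub_self]
  | cons letter b ih =>
    obtain ⟨k, ε⟩ := letter
    have hletter := signedSingle_sub_transpose (R := ℤ) ε (π (posL n k)) (π (posR n k))
    have hswap := leftOf_sub_leftOf_mul_braidSwap n π k
    have htail := ih (π * braidSwap n k)
    simp only [CMataux, finalPermS, transpose_add]
    rw [← sub_add_sub_cancel (leftOf n π) (leftOf n (π * braidSwap n k)), ← htail, hswap,
      ← hletter]
    abel

theorem stmt17 (n : ℕ) (b : List (Fin (n - 1) × Bool)) (hb : IsPureS n b) :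
    ∀ i j : Fin n, CMat n b i j = CMat n b j i := by
  intro i j
  have h := CMataux_sub_transpose n 1 b
  rw [show finalPermS n 1 b = 1 from hb, sub_self, sub_eq_zero] at h
  exact congrFun₂ h i j
end
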